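/- arXiv:physics/9706006 — 2 statements merged into one kernel-verified Lean document; each statement's English description precedes it below -/
import Mathlib

section
/- For the 3×3 Gell-Mann matrices, the fully symmetrized fourth-order trace is Tr(λ_{(i_1} λ_{i_2} λ_{i_3} λ_{i_4)}) = 2 δ_{(i_1 i_2} δ_{i_3 i_4)}, i.e. the fourth-order symmetric invariant tensor of su(3) is non-primitive (proportional to the symmetrized product of Killing tensors). -/
/-!
For a traceless `3 × 3` matrix, Cayley–Hamilton gives `X³ = ½ tr(X²) X + det X`, hence
`tr X⁴ = ½ (tr X²)²`. Polarized, this says that for traceless `A, B, C, D` the six traces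
`tr(A ⋯)` with `A` in front add up to the sum, over the three pairings of `A, B, C, D`, of
products of two quadratic traces. Summing over all orderings of four Gell-Mann matrices and
using `tr(λ_a λ_b) = 2 δ_{ab}` gives the claim.
-/

namespace Matrix

variable {R : Type*} [CommRing R]

theorem sum_trace_mul_orderings_eq_sum_pairings (A B C D : Matrix (Fin 3) (Fin 3) R)
    (hA : A.trace = 0) (hB : B.trace = 0) (hC : C.trace = 0) (hD : D.trace = 0) :
    (A * B * C * D).trace + (A * B * D * C).trace + (A * C * B * D).trace
      + (A * C * D * B).trace + (A * D * B * C).trace + (A * D * C * B).trace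
    = (A * B).trace * (C * D).trace + (A * C).trace * (B * D).trace
      + (A * D).trace * (C * B).trace := by
  simp only [trace, diag, mul_apply, Fin.sum_univ_succ, Fin.sum_univ_zero, add_zero,
    Fin.succ_zero_eq_one, Fin.succ_one_eq_two] at *
  rw [show A 2 2 = -A 0 0 - A 1 1 by linear_combination hA,
    show B 2 2 = -B 0 0 - B 1 1 by linear_combination hB,
    show C 2 2 = -C 0 0 - C 1 1 by linear_combination hC,
    show D 2 2 = -D 0 0 - D 1 1 by linear_combination hD]
  ring

theorem sum_perm_trace_mul_four (M : Fin 4 → Matrix (Fin 3) (Fin 3) R)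
    (hM : ∀ a, (M a).trace = 0) :
    6 * ∑ σ : Equiv.Perm (Fin 4), (M (σ 0) * M (σ 1) * M (σ 2) * M (σ 3)).trace
      = 3 * ∑ σ : Equiv.Perm (Fin 4),
          (M (σ 0) * M (σ 1)).trace * (M (σ 2) * M (σ 3)).trace := by
  set W : Equiv.Perm (Fin 4) → R := fun σ => (M (σ 0) * M (σ 1) * M (σ 2) * M (σ 3)).trace
  set Q : Equiv.Perm (Fin 4) → R := fun σ =>
    (M (σ 0) * M (σ 1)).trace * (M (σ 2) * M (σ 3)).trace
  have hW (τ : Equiv.Perm (Fin 4)) : ∑ σ, W (σ * τ) = ∑ σ, W σ :=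
    Equiv.sum_comp (Equiv.mulRight τ) W
  have hQ (τ : Equiv.Perm (Fin 4)) : ∑ σ, Q (σ * τ) = ∑ σ, Q σ :=
    Equiv.sum_comp (Equiv.mulRight τ) Q
  -- Summed over all `σ`, the left side counts each `W` six times, the right side each `Q` thrice.
  have hcoset (σ : Equiv.Perm (Fin 4)) :
      W σ + W (σ * Equiv.swap 2 3) + W (σ * Equiv.swap 1 2)
        + W (σ * (Equiv.swap 1 2 * Equiv.swap 2 3))
        + W (σ * (Equiv.swap 2 3 * Equiv.swap 1 2)) + W (σ * Equiv.swap 1 3)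
      = Q σ + Q (σ * Equiv.swap 1 2) + Q (σ * Equiv.swap 1 3) := by
    simp only [W, Q, Equiv.Perm.mul_apply, Equiv.swap_apply_def]
    norm_num
    exact sum_trace_mul_orderings_eq_sum_pairings _ _ _ _ (hM _) (hM _) (hM _) (hM _)
  have hsum := Finset.sum_congr rfl fun σ (_ : σ ∈ Finset.univ) => hcoset σ
  simp only [Finset.sum_add_distrib, hW, hQ] at hsum
  linear_combination hsum

end Matrix

theorem stmt6_general
    (lam : Fin 8 → Matrix (Fin 3) (Fin 3) ℂ)
    (htrless : ∀ a, (lam a).trace = 0)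
    (htr : ∀ a b, (lam a * lam b).trace = if a = b then 2 else 0) :
    ∀ i : Fin 4 → Fin 8,
      (24 : ℂ)⁻¹ * ∑ σ : Equiv.Perm (Fin 4),
          (lam (i (σ 0)) * lam (i (σ 1)) * lam (i (σ 2)) * lam (i (σ 3))).trace
      = 2 * ((24 : ℂ)⁻¹ * ∑ σ : Equiv.Perm (Fin 4),
          (if i (σ 0) = i (σ 1) then (1:ℂ) else 0) *
          (if i (σ 2) = i (σ 3) then (1:ℂ) else 0)) := by
  intro i
  have hsym := Matrix.sum_perm_trace_mul_four (lam ∘ i) fun a => htrless (i a)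
  have hpairs : ∑ σ : Equiv.Perm (Fin 4), (lam (i (σ 0)) * lam (i (σ 1))).trace
        * (lam (i (σ 2)) * lam (i (σ 3))).trace
      = 4 * ∑ σ : Equiv.Perm (Fin 4), (if i (σ 0) = i (σ 1) then (1:ℂ) else 0)
        * (if i (σ 2) = i (σ 3) then (1:ℂ) else 0) := by
    rw [Finset.mul_sum]
    refine Finset.sum_congr rfl fun σ _ => ?_
    simp only [htr]
    split_ifs <;> norm_num
  simp only [Function.comp_apply, hpairs] at hsym
  linear_combination (144 : ℂ)⁻¹ * hsym

/-- for the Gell-Mann matrices (a basis of traceless hermitian 3×3 matrices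
with `Tr(λ_iλ_j) = 2δ_{ij}`), the fully symmetrized fourth-order trace is
`Tr(λ_{(i₁}λ_{i₂}λ_{i₃}λ_{i₄)}) = 2 δ_{(i₁i₂}δ_{i₃i₄)}`. -/
theorem stmt6
    (lam : Fin 8 → Matrix (Fin 3) (Fin 3) ℂ)
    (hherm : ∀ a, (lam a).IsHermitian)
    (htrless : ∀ a, (lam a).trace = 0)
    (htr : ∀ a b, (lam a * lam b).trace = if a = b then 2 else 0) :
    ∀ i : Fin 4 → Fin 8,
      (24 : ℂ)⁻¹ * ∑ σ : Equiv.Perm (Fin 4),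
          (lam (i (σ 0)) * lam (i (σ 1)) * lam (i (σ 2)) * lam (i (σ 3))).trace
      = 2 * ((24 : ℂ)⁻¹ * ∑ σ : Equiv.Perm (Fin 4),
          (if i (σ 0) = i (σ 1) then (1:ℂ) else 0) *
          (if i (σ 2) = i (σ 3) then (1:ℂ) else 0)) :=
  stmt6_general lam htrless htr
end

section
/- For su(n), the totally symmetric rank-4 tensor t_{i_1 i_2 i_3 i_4} := (1/120)[ n(n²+1) d^{(4)}_{(i_1 i_2 i_3 i_4)} - 2(n²-4) δ_{(i_1 i_2} δ_{i_3 i_4)} ] is traceless: Σ_σ t_{σ σ i_3 i_4} = 0 for all i_3, i_4. -/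
/-!
Symmetrising a rank-4 tensor `G` with the symmetries of `d_{pqx} d_{xrt}` (swap within either
pair, exchange of the pairs) and tracing two slots, only the position of the traced pair
matters: in 8 of the 24 permutations it sits inside one pair, giving `Σ_s G_{ss ab}`, in the
other 16 it is split, giving `Σ_s G_{sa sb}`. For `d^{(4)}` these traces are `0` (as
`d_{ssx} = 0`) and `(n²-4)/n · δ_{ab}`; for `δδ` they are `(n²-1) δ_{ab}` and `δ_{ab}`. Then
`16 n(n²+1) (n²-4)/n = 2(n²-4)(8(n²-1) + 16)`.
-/

open Finset

section PairSymmetric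

variable {ι M : Type*}

/- `σ k ≤ 1` says that slot `k` receives `s`, so the condition says that both copies of `s` land
in the same pair of slots. -/
theorem apply_perm_cons_cons_eq_ite (G : ι → ι → ι → ι → M)
    (hG₁ : ∀ p q r t, G p q r t = G q p r t) (hG₂ : ∀ p q r t, G p q r t = G p q t r)
    (hG₃ : ∀ p q r t, G p q r t = G r t p q) (s a b : ι) (σ : Equiv.Perm (Fin 4)) :
    G (![s, s, a, b] (σ 0)) (![s, s, a, b] (σ 1)) (![s, s, a, b] (σ 2)) (![s, s, a, b] (σ 3)) =
      if (σ 0 ≤ 1 ↔ σ 1 ≤ 1) then G s s a b else G s a s b := by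
  have h01 : σ 0 ≠ σ 1 := σ.injective.ne (by decide)
  have h02 : σ 0 ≠ σ 2 := σ.injective.ne (by decide)
  have h03 : σ 0 ≠ σ 3 := σ.injective.ne (by decide)
  have h12 : σ 1 ≠ σ 2 := σ.injective.ne (by decide)
  have h13 : σ 1 ≠ σ 3 := σ.injective.ne (by decide)
  have h23 : σ 2 ≠ σ 3 := σ.injective.ne (by decide)
  generalize σ 0 = i₀, σ 1 = i₁, σ 2 = i₂, σ 3 = i₃ at *
  fin_cases i₀ <;> fin_cases i₁ <;> fin_cases i₂ <;> fin_cases i₃ <;>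
    simp at h01 h02 h03 h12 h13 h23 ⊢ <;> grind

theorem card_perm_fin_four_pair_unsplit :
    #{σ : Equiv.Perm (Fin 4) | σ 0 ≤ 1 ↔ σ 1 ≤ 1} = 8 := by
  decide

theorem card_perm_fin_four_pair_split :
    #{σ : Equiv.Perm (Fin 4) | ¬(σ 0 ≤ 1 ↔ σ 1 ≤ 1)} = 16 := by
  decide

theorem sum_sum_perm_cons_cons [Fintype ι] [AddCommMonoid M] (G : ι → ι → ι → ι → M)
    (hG₁ : ∀ p q r t, G p q r t = G q p r t) (hG₂ : ∀ p q r t, G p q r t = G p q t r)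
    (hG₃ : ∀ p q r t, G p q r t = G r t p q) (a b : ι) :
    ∑ s, ∑ σ : Equiv.Perm (Fin 4),
        G (![s, s, a, b] (σ 0)) (![s, s, a, b] (σ 1)) (![s, s, a, b] (σ 2))
          (![s, s, a, b] (σ 3)) =
      8 • ∑ s, G s s a b + 16 • ∑ s, G s a s b := by
  simp only [apply_perm_cons_cons_eq_ite G hG₁ hG₂ hG₃, sum_ite, sum_const,
    card_perm_fin_four_pair_unsplit, card_perm_fin_four_pair_split, sum_add_distrib, smul_sum]

end PairSymmetric

section SymmetricTensor

variable {ι R : Type*} [Fintype ι] [CommSemiring R] (d : ι → ι → ι → R)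

theorem sum_mul_comm_of_symm (h₁₂ : ∀ a b c, d a b c = d b a c)
    (h₂₃ : ∀ a b c, d a b c = d a c b) (p q r t : ι) :
    ∑ x, d p q x * d x r t = ∑ x, d r t x * d x p q := by
  refine sum_congr rfl fun x _ ↦ ?_
  rw [mul_comm]
  congr 1
  · rw [h₁₂ x r t, h₂₃ r x t]
  · rw [h₂₃ p q x, h₁₂ p x q]

theorem sum_sum_diag_mul_eq_zero (h₁₂ : ∀ a b c, d a b c = d b a c)
    (h₂₃ : ∀ a b c, d a b c = d a c b) (htr : ∀ a, ∑ b, d a b b = 0) (a b : ι) :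
    ∑ s, ∑ x, d s s x * d x a b = 0 := by
  have hss : ∀ x, ∑ s, d s s x = 0 := fun x ↦ by
    simpa only [h₂₃ _ _ x, h₁₂ _ x] using htr x
  rw [sum_comm]
  simp only [← sum_mul, hss, zero_mul, sum_const_zero]

theorem sum_sum_mul_eq_of_contraction (h₁₂ : ∀ a b c, d a b c = d b a c)
    (h₂₃ : ∀ a b c, d a b c = d a c b) [DecidableEq ι] (κ : R)
    (hcontr : ∀ a b, ∑ c, ∑ e, d a c e * d b c e = κ * (if a = b then 1 else 0)) (a b : ι) :
    ∑ s, ∑ x, d s a x * d x s b = κ * (if a = b then 1 else 0) := by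
  rw [← hcontr]
  refine sum_congr rfl fun s _ ↦ sum_congr rfl fun x _ ↦ ?_
  rw [h₁₂ s a x, h₂₃ x s b, h₁₂ x b s, h₂₃ b x s]

end SymmetricTensor

theorem sum_ite_eq_mul_ite_eq {ι R : Type*} [Fintype ι] [DecidableEq ι] [NonAssocSemiring R]
    (a b : ι) :
    ∑ s, (if s = a then (1 : R) else 0) * (if s = b then 1 else 0) = if a = b then 1 else 0 := by
  simp only [ite_mul, one_mul, zero_mul, sum_ite_eq', mem_univ, if_true]

theorem stmt18_general (n : ℕ)
    (d : Fin (n^2-1) → Fin (n^2-1) → Fin (n^2-1) → ℝ)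
    (hdsym : ∀ a b c, d a b c = d b a c ∧ d a b c = d a c b)
    (hdcontr : ∀ a b, ∑ c, ∑ e, d a c e * d b c e =
      (((n:ℝ)^2 - 4)/(n:ℝ)) * (if a = b then 1 else 0))
    (hdtrless : ∀ a, ∑ b, d a b b = 0)
    (t : (Fin 4 → Fin (n^2-1)) → ℝ)
    (ht : ∀ i, t i = (120 : ℝ)⁻¹ *
      ((n:ℝ) * ((n:ℝ)^2 + 1) * ((24 : ℝ)⁻¹ * ∑ σ : Equiv.Perm (Fin 4), ∑ x,
          d (i (σ 0)) (i (σ 1)) x * d x (i (σ 2)) (i (σ 3)))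
        - 2 * ((n:ℝ)^2 - 4) * ((24 : ℝ)⁻¹ * ∑ σ : Equiv.Perm (Fin 4),
          (if i (σ 0) = i (σ 1) then (1:ℝ) else 0) *
          (if i (σ 2) = i (σ 3) then (1:ℝ) else 0)))) :
    ∀ i₃ i₄, ∑ s, t ![s, s, i₃, i₄] = 0 := by
  intro i₃ i₄
  have hn : 1 < n ^ 2 := by have := i₃.pos; omega
  have h₁₂ a b c := (hdsym a b c).1
  have h₂₃ a b c := (hdsym a b c).2
  have hd4 := sum_sum_perm_cons_cons (fun p q r t ↦ ∑ x, d p q x * d x r t)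
    (fun p q r t ↦ by simp only [h₁₂ p q]) (fun p q r t ↦ by simp only [h₂₃ _ r t])
    (sum_mul_comm_of_symm d h₁₂ h₂₃) i₃ i₄
  have hδδ := sum_sum_perm_cons_cons
    (fun p q r t ↦ (if p = q then (1:ℝ) else 0) * (if r = t then (1:ℝ) else 0))
    (by simp only [eq_comm, implies_true]) (by simp only [eq_comm, implies_true])
    (fun p q r t ↦ mul_comm _ _) i₃ i₄
  simp only [sum_sum_diag_mul_eq_zero d h₁₂ h₂₃ hdtrless,
    sum_sum_mul_eq_of_contraction d h₁₂ h₂₃ _ hdcontr] at hd4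
  simp only [if_true, one_mul, sum_const, card_univ, Fintype.card_fin,
    sum_ite_eq_mul_ite_eq] at hδδ
  simp only [ht, ← mul_sum, sum_sub_distrib, hd4, hδδ, nsmul_eq_mul]
  have hn₀ : (n : ℝ) ≠ 0 := Nat.cast_ne_zero.mpr (by rintro rfl; simp at hn)
  push_cast [Nat.one_le_of_lt hn]
  field_simp
  ring

/-- for `su(n)`, the totally symmetric rank-4 tensor
`t_{i₁i₂i₃i₄} = (1/120)[n(n²+1) d^{(4)}_{(i₁i₂i₃i₄)} - 2(n²-4) δ_{(i₁i₂}δ_{i₃i₄)}]`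
(with `d^{(4)}_{abcd} = Σ_x d_{abx} d_{xcd}`) is traceless: `Σ_σ t_{σσi₃i₄} = 0`. -/
theorem stmt18 (n : ℕ) (hn : 2 ≤ n)
    (d : Fin (n^2-1) → Fin (n^2-1) → Fin (n^2-1) → ℝ)
    (hdsym : ∀ a b c, d a b c = d b a c ∧ d a b c = d a c b)
    (hdcontr : ∀ a b, ∑ c, ∑ e, d a c e * d b c e =
      (((n:ℝ)^2 - 4)/(n:ℝ)) * (if a = b then 1 else 0))
    (hdtrless : ∀ a, ∑ b, d a b b = 0)
    (t : (Fin 4 → Fin (n^2-1)) → ℝ)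
    (ht : ∀ i, t i = (120 : ℝ)⁻¹ *
      ((n:ℝ) * ((n:ℝ)^2 + 1) * ((24 : ℝ)⁻¹ * ∑ σ : Equiv.Perm (Fin 4), ∑ x,
          d (i (σ 0)) (i (σ 1)) x * d x (i (σ 2)) (i (σ 3)))
        - 2 * ((n:ℝ)^2 - 4) * ((24 : ℝ)⁻¹ * ∑ σ : Equiv.Perm (Fin 4),
          (if i (σ 0) = i (σ 1) then (1:ℝ) else 0) *
          (if i (σ 2) = i (σ 3) then (1:ℝ) else 0)))) :
    ∀ i₃ i₄, ∑ s, t ![s, s, i₃, i₄] = 0 :=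
  stmt18_general n d hdsym hdcontr hdtrless t ht
end
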